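/- Let m be a familial monad on c ⥤ Type (familial and cartesian), let Θ_m be the full subcategory of the Eilenberg–Moore category of m spanned by the free algebras on the arities m[M], and let i : Θ_m ⥤ m-Alg be the inclusion. Then the restricted Yoneda nerve functor N_m : m-Alg ⥤ (Θ_mᵒᵖ ⥤ Type), defined by N_m(X)(M) = Hom_{m-Alg}(i(M), X), is fully faithful. -/

import Mathlib

/-!
Every element of `m A` at `C` is `m u γ_I` for the generic element `γ_I ∈ m m[I]` of an
operation `I` and some `u : m[I] ⟶ A`. Applied to `η x` for `x` in an algebra `X`, this writes
`x = h γ_I` for the algebra map `h : Free m[I] ⟶ X` transposed to `u`, so algebra maps are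
detected by their nerves. Conversely, a map `φ` of nerves acts on maps `u : m[E] ⟶ X` by
transposition along the free–forgetful adjunction, compatibly with precomposition by maps of
arities. Applied to the second component of `m X ≅ Σ I, (m[I] ⟶ X)` this gives `Φ : m X → m Y`,
and `F := a_Y ∘ Φ ∘ η` satisfies `F ∘ h = φ h` for every `h : Free m[E] ⟶ X`. Testing on elements
of the form `h γ`, this identity yields the naturality of `F`, the algebra law and `N F = φ`.
-/
namespace Fam
open CategoryTheory Opposite Limits
private lemma sigmaExt {α : Type} {β : α → Type} {a a' : α} {b : β a} {b' : β a'}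
    (h : a = a') (h' : HEq b b') : (⟨a, b⟩ : Σ x, β x) = ⟨a', b'⟩ := by
  subst h; cases h'; rfl
variable {c d : Type} [SmallCategory c] [SmallCategory d]
def elHom (pos : c ⥤ Type) {C C' : c} (f : C ⟶ C') (I : pos.obj C) :
    pos.elementsMk C I ⟶ pos.elementsMk C' (pos.map f I) :=
  CategoryOfElements.homMk _ _ f rfl
lemma eqToHom_val {pos : c ⥤ Type} {x y : pos.Elements} (E : x = y) :
    (eqToHom E).val = eqToHom (congrArg Sigma.fst E) := by
  subst E; simp
@[simps]
def famApply (pos : c ⥤ Type) (ar : pos.Elementsᵒᵖ ⥤ d ⥤ Type) :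
    (d ⥤ Type) ⥤ c ⥤ Type where
  obj X :=
    { obj := fun C => Σ I : pos.obj C, ar.obj (op (pos.elementsMk C I)) ⟶ X
      map := fun {C C'} f => TypeCat.ofHom fun x => ⟨pos.map f x.1, ar.map (elHom pos f x.1).op ≫ x.2⟩
      map_id := by
        intro C
        refine ConcreteCategory.ext_apply fun x => ?_
        obtain ⟨I, g⟩ := x
        have h : pos.map (𝟙 C) I = I := by simp
        have hE : pos.elementsMk C I = pos.elementsMk C (pos.map (𝟙 C) I) := by rw [h]
        have he : elHom pos (𝟙 C) I = eqToHom hE := by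
          apply CategoryOfElements.ext
          rw [eqToHom_val]
          simp [elHom]
        dsimp
        refine sigmaExt h ?_
        rw [he]
        simp [eqToHom_op, eqToHom_map]
      map_comp := by
        intro C C' C'' f g
        refine ConcreteCategory.ext_apply fun x => ?_
        obtain ⟨I, u⟩ := x
        have h : pos.map (f ≫ g) I = pos.map g (pos.map f I) := by simp
        have hE : pos.elementsMk C'' (pos.map (f ≫ g) I)
            = pos.elementsMk C'' (pos.map g (pos.map f I)) := by rw [h]
        have hcomp : elHom pos f I ≫ elHom pos g (pos.map f I)
            = elHom pos (f ≫ g) I ≫ eqToHom hE := by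
          apply CategoryOfElements.ext
          rw [CategoryOfElements.comp_val, CategoryOfElements.comp_val, eqToHom_val]
          simp [elHom]
        dsimp
        refine sigmaExt h ?_
        rw [← Category.assoc, ← ar.map_comp, ← op_comp, hcomp, op_comp, ar.map_comp,
          Category.assoc]
        simp [eqToHom_op, eqToHom_map] }
  map {X Y} t :=
    { app := fun C => TypeCat.ofHom fun x => ⟨x.1, x.2 ≫ t⟩
      naturality := by
        intro C C' f
        refine ConcreteCategory.ext_apply fun x => ?_
        dsimp
        rw [Category.assoc] }
  map_id := by
    intro X
    apply NatTrans.ext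
    funext C
    refine ConcreteCategory.ext_apply fun x => ?_
    dsimp
    rw [Category.comp_id]
  map_comp := by
    intro X Y Z s t
    apply NatTrans.ext
    funext C
    refine ConcreteCategory.ext_apply fun x => ?_
    dsimp
    rw [Category.assoc]

/-- The unit exhibiting `famApply pos (ar ⋙ G)` as the right coclosure `⌈F/G⌉`,
i.e. the left Kan extension of the familial functor `F = famApply pos ar` along `G`. -/
def coclosureUnit {e : Type} [SmallCategory e] (pos : c ⥤ Type)
    (ar : pos.Elementsᵒᵖ ⥤ e ⥤ Type) (G : (e ⥤ Type) ⥤ d ⥤ Type) :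
    famApply pos ar ⟶ G ⋙ famApply pos (ar ⋙ G) where
  app X :=
    { app := fun C => TypeCat.ofHom fun x => ⟨x.1, G.map x.2⟩
      naturality := by
        intro C C' f
        refine ConcreteCategory.ext_apply fun x => ?_
        show (⟨pos.map f x.1, G.map (ar.map (elHom pos f x.1).op ≫ x.2)⟩ :
            Σ I : pos.obj C', (ar ⋙ G).obj (op (pos.elementsMk C' I)) ⟶ G.obj X)
          = ⟨pos.map f x.1, G.map (ar.map (elHom pos f x.1).op) ≫ G.map x.2⟩
        rw [G.map_comp] }
  naturality := by
    intro X Y t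
    apply NatTrans.ext
    funext C
    refine ConcreteCategory.ext_apply fun x => ?_
    show (⟨x.1, G.map (x.2 ≫ t)⟩ :
        Σ I : pos.obj C, (ar ⋙ G).obj (op (pos.elementsMk C I)) ⟶ G.obj Y)
      = ⟨x.1, G.map x.2 ≫ G.map t⟩
    rw [G.map_comp]

section Statement5

variable {c : Type} [SmallCategory c]
  (m : Monad (c ⥤ Type)) {posm : c ⥤ Type} (arm : posm.Elementsᵒᵖ ⥤ c ⥤ Type)

/-- The free `m`-algebra on the arity of the operation `M`. -/
def theoryObj (M : posm.Elements) : m.Algebra :=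
  m.free.obj (arm.obj (op M))

/-- The theory category `Θ_m`: the full subcategory of the Eilenberg–Moore category of `m`
spanned by the free algebras on the arities `m[M]`. -/
def Theta : Type :=
  InducedCategory m.Algebra (theoryObj m arm)

instance : Category (Theta m arm) :=
  InducedCategory.instCategory

/-- The inclusion `i : Θ_m ⥤ m-Alg`. -/
def thetaIncl : Theta m arm ⥤ m.Algebra :=
  inducedFunctor (theoryObj m arm)

/-- The nerve functor `N_m : m-Alg ⥤ (Θ_mᵒᵖ ⥤ Type)` (restricted Yoneda):
`N_m(X)(M) = Hom_{m-Alg}(i(M), X)`. -/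
def nerveFunctor : m.Algebra ⥤ ((Theta m arm)ᵒᵖ ⥤ Type) :=
  yoneda ⋙ (Functor.whiskeringLeft (Theta m arm)ᵒᵖ m.Algebraᵒᵖ Type).obj (thetaIncl m arm).op


section Familial

variable {pos : c ⥤ Type} {ar : pos.Elementsᵒᵖ ⥤ d ⥤ Type} {T : (d ⥤ Type) ⥤ c ⥤ Type}
  (e : famApply pos ar ≅ T)

def genericElement {C : c} (I : pos.obj C) : (T.obj (ar.obj (op (pos.elementsMk C I)))).obj C :=
  (e.hom.app _).app C ⟨I, 𝟙 _⟩

lemma map_genericElement {X : d ⥤ Type} {C : c} (I : pos.obj C)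
    (u : ar.obj (op (pos.elementsMk C I)) ⟶ X) :
    (T.map u).app C (genericElement e I) = (e.hom.app X).app C ⟨I, u⟩ :=
  (ConcreteCategory.congr_hom (NatTrans.congr_app (e.hom.naturality u) C) ⟨I, 𝟙 _⟩).symm

lemma inv_map_genericElement {X : d ⥤ Type} {C : c} (I : pos.obj C)
    (u : ar.obj (op (pos.elementsMk C I)) ⟶ X) :
    (e.inv.app X).app C ((T.map u).app C (genericElement e I)) = ⟨I, u⟩ := by
  rw [map_genericElement]
  exact (elementwise_of% e.hom_inv_id_app_app X C) ⟨I, u⟩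

lemma exists_eq_map_genericElement {X : d ⥤ Type} {C : c} (ξ : (T.obj X).obj C) :
    ∃ (I : pos.obj C) (u : ar.obj (op (pos.elementsMk C I)) ⟶ X),
      (T.map u).app C (genericElement e I) = ξ := by
  refine ⟨((e.inv.app X).app C ξ).1, ((e.inv.app X).app C ξ).2, ?_⟩
  rw [map_genericElement]
  exact (elementwise_of% e.inv_hom_id_app_app X C) ξ

end Familial

section FreeLift

variable {D : Type*} [Category D] (T : Monad D) {A B : D} {X : T.Algebra}

def freeLift (u : A ⟶ X.A) : T.free.obj A ⟶ X :=
  (T.adj.homEquiv A X).symm u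

lemma freeLift_f (u : A ⟶ X.A) : (freeLift T u).f = T.map u ≫ X.a := by
  simp only [freeLift, Monad.adj, Adjunction.mkOfHomEquiv_homEquiv]
  rfl

lemma unit_comp_freeLift_f (u : A ⟶ X.A) : T.η.app A ≫ (freeLift T u).f = u := by
  rw [freeLift_f, ← T.η.naturality_assoc, X.unit, Functor.id_map]
  exact Category.comp_id u

lemma freeLift_comp_f (w : A ⟶ (T.free.obj B).A) (h : T.free.obj B ⟶ X) :
    freeLift T (w ≫ h.f) = freeLift T w ≫ h :=
  T.adj.homEquiv_naturality_right_symm w h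

end FreeLift

lemma freeLift_f_app {A : c ⥤ Type} {X : m.Algebra} (u : A ⟶ X.A) {C : c} (y : (m.obj A).obj C) :
    (freeLift m u).f.app C y = X.a.app C ((m.map u).app C y) := by
  rw [freeLift_f]
  rfl

lemma unit_app_naturality_apply {A B : c ⥤ Type} (f : A ⟶ B) {C : c} (x : A.obj C) :
    (m.η.app B).app C (f.app C x) = (m.map f).app C ((m.η.app A).app C x) :=
  (elementwise_of% NatTrans.congr_app (m.η.naturality f) C) x

lemma exists_free_hom_f_app_eq (em : famApply posm arm ≅ (m : (c ⥤ Type) ⥤ c ⥤ Type))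
    {X : m.Algebra} {C : c} (x : X.A.obj C) :
    ∃ (E : posm.Elements) (h : m.free.obj (arm.obj (op E)) ⟶ X)
      (γ : (m.free.obj (arm.obj (op E))).A.obj C), h.f.app C γ = x := by
  obtain ⟨I, u, hu⟩ := exists_eq_map_genericElement em ((m.η.app X.A).app C x)
  refine ⟨_, freeLift m u, genericElement em I, ?_⟩
  rw [freeLift_f_app, hu]
  exact (elementwise_of% NatTrans.congr_app X.unit C) x

lemma nerveFunctor_faithful (em : famApply posm arm ≅ (m : (c ⥤ Type) ⥤ c ⥤ Type)) :
    (nerveFunctor m arm).Faithful where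
  map_injective {X Y} f g hfg := by
    ext C x
    obtain ⟨E, h, γ, rfl⟩ := exists_free_hom_f_app_eq m arm em x
    have hh : h ≫ f = h ≫ g := ConcreteCategory.congr_hom (NatTrans.congr_app hfg (op E)) h
    exact congr_arg (fun k => k.f.app C γ) hh

section NerveLift

variable {X Y : m.Algebra} (φ : (nerveFunctor m arm).obj X ⟶ (nerveFunctor m arm).obj Y)

/-- `φ.app` at `E`, typed through `posm.Elements` so that it composes with maps of free algebras
without unfolding `Theta`. -/
def nerveApp (E : posm.Elements) (h : m.free.obj (arm.obj (op E)) ⟶ X) :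
    m.free.obj (arm.obj (op E)) ⟶ Y :=
  φ.app (op (E : Theta m arm)) h

lemma nerveApp_comp {E E' : posm.Elements}
    (k : m.free.obj (arm.obj (op E')) ⟶ m.free.obj (arm.obj (op E)))
    (h : m.free.obj (arm.obj (op E)) ⟶ X) :
    nerveApp m arm φ E' (k ≫ h) = k ≫ nerveApp m arm φ E h :=
  NatTrans.naturality_apply φ
    (show @Quiver.Hom (Theta m arm) _ E' E from InducedCategory.homMk k).op h

def arityMap {E : posm.Elements} (u : arm.obj (op E) ⟶ X.A) : arm.obj (op E) ⟶ Y.A :=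
  m.η.app _ ≫ (nerveApp m arm φ E (freeLift m u)).f

lemma arityMap_comp_f {E E' : posm.Elements}
    (w : arm.obj (op E') ⟶ (m.free.obj (arm.obj (op E))).A)
    (h : m.free.obj (arm.obj (op E)) ⟶ X) :
    arityMap m arm φ (w ≫ h.f) = w ≫ (nerveApp m arm φ E h).f := by
  rw [arityMap, freeLift_comp_f, nerveApp_comp, Monad.Algebra.comp_f]
  exact (Category.assoc _ _ _).symm.trans (congrArg (· ≫ _) (unit_comp_freeLift_f m w))

variable (em : famApply posm arm ≅ (m : (c ⥤ Type) ⥤ c ⥤ Type))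

def termMap {C : c} (ξ : (m.obj X.A).obj C) : (m.obj Y.A).obj C :=
  (em.hom.app Y.A).app C
    ⟨((em.inv.app X.A).app C ξ).1, arityMap m arm φ ((em.inv.app X.A).app C ξ).2⟩

lemma termMap_map_genericElement {C : c} (I : posm.obj C)
    (u : arm.obj (op (posm.elementsMk C I)) ⟶ X.A) :
    termMap m arm φ em ((m.map u).app C (genericElement em I))
      = (m.map (arityMap m arm φ u)).app C (genericElement em I) := by
  rw [termMap, inv_map_genericElement, map_genericElement]

lemma termMap_map_f {E : posm.Elements} (h : m.free.obj (arm.obj (op E)) ⟶ X) {C : c}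
    (ζ : (m.obj (m.free.obj (arm.obj (op E))).A).obj C) :
    termMap m arm φ em ((m.map h.f).app C ζ) = (m.map (nerveApp m arm φ E h).f).app C ζ := by
  obtain ⟨I, w, rfl⟩ := exists_eq_map_genericElement em ζ
  have map_map : ∀ {Z : m.Algebra} (k : m.free.obj (arm.obj (op E)) ⟶ Z),
      (m.map k.f).app C ((m.map w).app C (genericElement em I))
        = (m.map (w ≫ k.f)).app C (genericElement em I) := by
    intro Z k
    rw [Functor.map_comp]
    rfl
  rw [map_map, map_map, termMap_map_genericElement, arityMap_comp_f]

def nerveLiftApp (C : c) (x : X.A.obj C) : Y.A.obj C :=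
  Y.a.app C (termMap m arm φ em ((m.η.app X.A).app C x))

lemma nerveLiftApp_f_app {E : posm.Elements} (h : m.free.obj (arm.obj (op E)) ⟶ X) {C : c}
    (γ : (m.free.obj (arm.obj (op E))).A.obj C) :
    nerveLiftApp m arm φ em C (h.f.app C γ) = (nerveApp m arm φ E h).f.app C γ := by
  rw [nerveLiftApp, unit_app_naturality_apply, termMap_map_f, ← unit_app_naturality_apply]
  exact (elementwise_of% NatTrans.congr_app Y.unit C) _

def nerveLiftNatTrans : X.A ⟶ Y.A where
  app C := TypeCat.ofHom (nerveLiftApp m arm φ em C)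
  naturality C C' g := by
    refine ConcreteCategory.ext_apply fun x => ?_
    obtain ⟨E, h, γ, rfl⟩ := exists_free_hom_f_app_eq m arm em x
    show nerveLiftApp m arm φ em C' (X.A.map g (h.f.app C γ))
      = Y.A.map g (nerveLiftApp m arm φ em C (h.f.app C γ))
    rw [← NatTrans.naturality_apply, nerveLiftApp_f_app, nerveLiftApp_f_app,
      NatTrans.naturality_apply]

lemma f_comp_nerveLiftNatTrans {E : posm.Elements} (h : m.free.obj (arm.obj (op E)) ⟶ X) :
    h.f ≫ nerveLiftNatTrans m arm φ em = (nerveApp m arm φ E h).f := by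
  ext C γ
  exact nerveLiftApp_f_app m arm φ em h γ

lemma map_comp_map_nerveLiftNatTrans_comp {E : posm.Elements} (u : arm.obj (op E) ⟶ X.A) :
    m.map u ≫ m.map (nerveLiftNatTrans m arm φ em) ≫ Y.a
      = m.map u ≫ X.a ≫ nerveLiftNatTrans m arm φ em := by
  set p := nerveApp m arm φ E (freeLift m u)
  have hu : u ≫ nerveLiftNatTrans m arm φ em = m.η.app _ ≫ p.f := by
    rw [← f_comp_nerveLiftNatTrans m arm φ em (freeLift m u)]
    exact (congrArg (· ≫ _) (unit_comp_freeLift_f m u)).symm.trans (Category.assoc _ _ _)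
  have hL : m.map u ≫ m.map (nerveLiftNatTrans m arm φ em) ≫ Y.a = p.f := by
    rw [← m.map_comp_assoc, hu]
    erw [m.map_comp_assoc, p.h, ← Category.assoc, m.right_unit, Category.id_comp]
  have hR : m.map u ≫ X.a ≫ nerveLiftNatTrans m arm φ em = p.f := by
    erw [← Category.assoc, ← freeLift_f, f_comp_nerveLiftNatTrans]
  exact hL.trans hR.symm

lemma nerveLiftNatTrans_algebra :
    m.map (nerveLiftNatTrans m arm φ em) ≫ Y.a = X.a ≫ nerveLiftNatTrans m arm φ em := by
  ext C ξ
  obtain ⟨I, u, rfl⟩ := exists_eq_map_genericElement em ξ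
  exact (elementwise_of% NatTrans.congr_app (map_comp_map_nerveLiftNatTrans_comp m arm φ em u) C) _

def nerveLift : X ⟶ Y where
  f := nerveLiftNatTrans m arm φ em
  h := nerveLiftNatTrans_algebra m arm φ em

lemma nerveFunctor_map_nerveLift : (nerveFunctor m arm).map (nerveLift m arm φ em) = φ := by
  ext E h
  exact Monad.Algebra.Hom.ext (f_comp_nerveLiftNatTrans m arm φ em (E := E.unop) h)

end NerveLift

theorem nerveFunctor_full_and_faithful
    (em : famApply posm arm ≅ (m : (c ⥤ Type) ⥤ c ⥤ Type)) :
    (nerveFunctor m arm).Full ∧ (nerveFunctor m arm).Faithful :=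
  ⟨⟨fun φ => ⟨nerveLift m arm φ em, nerveFunctor_map_nerveLift m arm φ em⟩⟩,
    nerveFunctor_faithful m arm em⟩

end Statement5

end Fam
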